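/- arXiv:1909.11393 — 5 statements merged into one kernel-verified Lean document; each statement's English description precedes it below -/
import Mathlib

section
/- Let Π : M → N be a fibration, X a vector field on M, and σ : N → M a section of Π. Then σ is a solution of the Π-Hamilton–Jacobi equation for X (i.e. σ_* ∘ X^σ = X ∘ σ with X^σ = Π_* ∘ X ∘ σ) if and only if the image of σ is an X-invariant submanifold of M. -/
/-!
Since `π ∘ σ = id`, the chain rule gives `π_* ∘ σ_* = id`, so `σ_* ∘ π_*` is a projection onto
the range of `σ_*`, i.e. onto the tangent spaces of `Im σ`. The Hamilton–Jacobi equation says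
exactly that `X ∘ σ` is fixed by this projection, which is the same as lying in its range.
-/

open Function Set

section LeftInverse

variable {𝕜 : Type*} [NontriviallyNormedField 𝕜]
  {E : Type*} [NormedAddCommGroup E] [NormedSpace 𝕜 E] {H : Type*} [TopologicalSpace H]
  {I : ModelWithCorners 𝕜 E H} {M : Type*} [TopologicalSpace M] [ChartedSpace H M]
  {E' : Type*} [NormedAddCommGroup E'] [NormedSpace 𝕜 E'] {H' : Type*} [TopologicalSpace H']
  {J : ModelWithCorners 𝕜 E' H'} {N : Type*} [TopologicalSpace N] [ChartedSpace H' N]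
  {π : M → N} {σ : N → M} {q : N}

theorem mfderiv_apply_mfderiv_of_leftInverse (hπσ : LeftInverse π σ)
    (hπ : MDifferentiableAt I J π (σ q)) (hσ : MDifferentiableAt J I σ q)
    (v : TangentSpace J q) :
    mfderiv I J π (σ q) (mfderiv J I σ q v) = v := by
  rw [← mfderiv_comp_apply q hπ hσ, hπσ.comp_eq_id, mfderiv_id]
  rfl

theorem mfderiv_apply_mfderiv_of_mem_range (hπσ : LeftInverse π σ)
    (hπ : MDifferentiableAt I J π (σ q)) (hσ : MDifferentiableAt J I σ q)
    {w : TangentSpace I (σ q)} (hw : w ∈ range (mfderiv J I σ q)) :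
    mfderiv J I σ q (mfderiv I J π (σ q) w) = w := by
  obtain ⟨v, rfl⟩ := hw
  rw [mfderiv_apply_mfderiv_of_leftInverse hπσ hπ hσ]

end LeftInverse

theorem stmt_1_general
    {E : Type*} [NormedAddCommGroup E] [NormedSpace ℝ E]
    {F : Type*} [NormedAddCommGroup F] [NormedSpace ℝ F]
    {HM : Type*} [TopologicalSpace HM] {HN : Type*} [TopologicalSpace HN]
    (I : ModelWithCorners ℝ E HM) (J : ModelWithCorners ℝ F HN)
    {M : Type*} [TopologicalSpace M] [ChartedSpace HM M]
    {N : Type*} [TopologicalSpace N] [ChartedSpace HN N]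
    (proj : M → N) (hproj : ContMDiff I J (⊤ : ℕ∞) proj)
    (X : (p : M) → TangentSpace I p)
    (σ : N → M) (hσ : ContMDiff J I (⊤ : ℕ∞) σ)
    (hsec : ∀ q, proj (σ q) = q)
    (Xσ : (q : N) → TangentSpace J q)
    (hXσ : ∀ q, Xσ q = mfderiv I J proj (σ q) (X (σ q))) :
    (∀ q, mfderiv J I σ q (Xσ q) = X (σ q)) ↔
      (∀ q, X (σ q) ∈ Set.range (mfderiv J I σ q)) := by
  refine ⟨fun h q => ⟨Xσ q, h q⟩, fun h q => ?_⟩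
  rw [hXσ q]
  exact mfderiv_apply_mfderiv_of_mem_range hsec
    ((hproj (σ q)).mdifferentiableAt (by simp)) ((hσ q).mdifferentiableAt (by simp)) (h q)

/-- A section `σ` of a fibration `proj : M → N` solves the Π-Hamilton–Jacobi
equation for `X` (i.e. `σ_* ∘ X^σ = X ∘ σ` with `X^σ = proj_* ∘ X ∘ σ`) iff the image of `σ`
is an `X`-invariant submanifold, i.e. `X (σ q)` is tangent to `Im σ` (lies in the range of
`σ_*` at `q`) for every `q`. -/
theorem stmt_1
    {E : Type*} [NormedAddCommGroup E] [NormedSpace ℝ E] [FiniteDimensional ℝ E]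
    {F : Type*} [NormedAddCommGroup F] [NormedSpace ℝ F] [FiniteDimensional ℝ F]
    {HM : Type*} [TopologicalSpace HM] {HN : Type*} [TopologicalSpace HN]
    (I : ModelWithCorners ℝ E HM) (J : ModelWithCorners ℝ F HN)
    {M : Type*} [TopologicalSpace M] [ChartedSpace HM M] [IsManifold I (⊤ : ℕ∞) M]
    {N : Type*} [TopologicalSpace N] [ChartedSpace HN N] [IsManifold J (⊤ : ℕ∞) N]
    (proj : M → N) (hproj : ContMDiff I J (⊤ : ℕ∞) proj)
    (hsurj : Function.Surjective proj)
    (hsubm : ∀ p : M, Function.Surjective (mfderiv I J proj p))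
    (X : (p : M) → TangentSpace I p)
    (hX : ContMDiff I I.tangent (⊤ : ℕ∞) (fun p => (⟨p, X p⟩ : TangentBundle I M)))
    (σ : N → M) (hσ : ContMDiff J I (⊤ : ℕ∞) σ)
    (hsec : ∀ q, proj (σ q) = q)
    (Xσ : (q : N) → TangentSpace J q)
    (hXσ : ∀ q, Xσ q = mfderiv I J proj (σ q) (X (σ q))) :
    (∀ q, mfderiv J I σ q (Xσ q) = X (σ q)) ↔
      (∀ q, X (σ q) ∈ Set.range (mfderiv J I σ q)) :=
  stmt_1_general I J proj hproj X σ hσ hsec Xσ hXσ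
end

section
/- Under the assumptions of the contact Hamilton–Jacobi setting, if a section σ of Π satisfies i_{X_H^σ} σ* dη = σ*(ξ(H) η − dH) and i_{X_H^σ} σ* η = σ* H, then the image of the map σ_* ∘ X_H^σ − X_H ∘ σ is contained in Ker Π_* ∩ (Im σ_*)^⊥ ∩ Ker η, where ⊥ denotes the dη-orthogonal. -/
open scoped Manifold

theorem mfderiv_apply_mfderiv_of_leftInverse_s7
    {E : Type*} [NormedAddCommGroup E] [NormedSpace ℝ E]
    {HM : Type*} [TopologicalSpace HM] {I : ModelWithCorners ℝ E HM}
    {M : Type*} [TopologicalSpace M] [ChartedSpace HM M]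
    {F : Type*} [NormedAddCommGroup F] [NormedSpace ℝ F]
    {HN : Type*} [TopologicalSpace HN] {J : ModelWithCorners ℝ F HN}
    {N : Type*} [TopologicalSpace N] [ChartedSpace HN N]
    {proj : M → N} {σ : N → M} (hsec : Function.LeftInverse proj σ) {q : N}
    (hproj : MDifferentiableAt I J proj (σ q)) (hσ : MDifferentiableAt J I σ q)
    (v : TangentSpace J q) :
    mfderiv I J proj (σ q) (mfderiv J I σ q v) = v := by
  rw [← mfderiv_comp_apply q hproj hσ, hsec.comp_eq_id, mfderiv_id]
  rfl

theorem stmt_7_general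
    {E : Type*} [NormedAddCommGroup E] [NormedSpace ℝ E]
    {HM : Type*} [TopologicalSpace HM]
    (I : ModelWithCorners ℝ E HM)
    {M : Type*} [TopologicalSpace M] [ChartedSpace HM M]
    -- the contact form and its exterior differential, as pointwise (bi)linear forms
    (η : (p : M) → TangentSpace I p →L[ℝ] ℝ)
    (dη : (p : M) → TangentSpace I p →L[ℝ] TangentSpace I p →L[ℝ] ℝ)
    -- the Hamiltonian function, its differential, `ξ(H)`, and the contact field `X_H`
    (H : M → ℝ)
    (dH : (p : M) → TangentSpace I p →L[ℝ] ℝ)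
    (ξH : M → ℝ)
    (XH : (p : M) → TangentSpace I p)
    (hXH1 : ∀ p (w : TangentSpace I p), dη p (XH p) w = - dH p w + ξH p * η p w)
    (hXH2 : ∀ p, η p (XH p) = H p)
    -- the fibration
    {F : Type*} [NormedAddCommGroup F] [NormedSpace ℝ F]
    {HN : Type*} [TopologicalSpace HN]
    (J : ModelWithCorners ℝ F HN)
    {N : Type*} [TopologicalSpace N] [ChartedSpace HN N]
    (proj : M → N) (hproj : ContMDiff I J (⊤ : ℕ∞) proj)
    -- a section of the fibration and the projected field `X_H^σ := proj_* ∘ X_H ∘ σ`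
    (σ : N → M) (hσ : ContMDiff J I (⊤ : ℕ∞) σ)
    (hsec : ∀ q, proj (σ q) = q)
    (XHσ : (q : N) → TangentSpace J q)
    (hXHσ : ∀ q, XHσ q = mfderiv I J proj (σ q) (XH (σ q)))
    (hA : ∀ q (v : TangentSpace J q),
      dη (σ q) (mfderiv J I σ q (XHσ q)) (mfderiv J I σ q v) =
        ξH (σ q) * η (σ q) (mfderiv J I σ q v) - dH (σ q) (mfderiv J I σ q v))
    (hB : ∀ q, η (σ q) (mfderiv J I σ q (XHσ q)) = H (σ q)) :
    ∀ q,
      mfderiv I J proj (σ q) (mfderiv J I σ q (XHσ q) - XH (σ q)) = 0 ∧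
      (∀ u ∈ Set.range (mfderiv J I σ q),
        dη (σ q) (mfderiv J I σ q (XHσ q) - XH (σ q)) u = 0) ∧
      η (σ q) (mfderiv J I σ q (XHσ q) - XH (σ q)) = 0 := by
  intro q
  refine ⟨?vertical, ?orthogonal, ?horizontal⟩
  case vertical =>
    rw [map_sub, mfderiv_apply_mfderiv_of_leftInverse_s7 hsec (hproj.mdifferentiableAt (by simp))
      (hσ.mdifferentiableAt (by simp)), hXHσ, sub_self]
  case orthogonal =>
    rintro _ ⟨v, rfl⟩
    rw [map_sub, sub_apply, hA, hXH1]
    ring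
  case horizontal =>
    rw [map_sub, hB, hXH2, sub_self]

/-- If a section `σ` satisfies `i_{X_H^σ} σ*dη = σ*(ξ(H) η − dH)` and
`i_{X_H^σ} σ*η = σ*H`, then the image of `σ_* ∘ X_H^σ − X_H ∘ σ` lies in
`Ker proj_* ∩ (Im σ_*)^⊥ ∩ Ker η`, where `⊥` is the `dη`-orthogonal. -/
theorem stmt_7
    {n : ℕ}
    {E : Type*} [NormedAddCommGroup E] [NormedSpace ℝ E] [FiniteDimensional ℝ E]
    {HM : Type*} [TopologicalSpace HM]
    (I : ModelWithCorners ℝ E HM)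
    {M : Type*} [TopologicalSpace M] [ChartedSpace HM M] [IsManifold I (⊤ : ℕ∞) M]
    (hdim : Module.finrank ℝ E = 2 * n + 1)
    -- the contact form and its exterior differential, as pointwise (bi)linear forms
    (η : (p : M) → TangentSpace I p →L[ℝ] ℝ)
    (dη : (p : M) → TangentSpace I p →L[ℝ] TangentSpace I p →L[ℝ] ℝ)
    (hskew : ∀ p (v w : TangentSpace I p), dη p v w = - dη p w v)
    -- contact condition: `(dη)^n ∧ η` is a volume form, encoded as `Ker η_p ∩ Ker dη_p = 0`
    (hcontact : ∀ p (v : TangentSpace I p),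
      η p v = 0 → (∀ w, dη p v w = 0) → v = 0)
    -- the Reeb vector field
    (ξ : (p : M) → TangentSpace I p)
    (hξ1 : ∀ p (w : TangentSpace I p), dη p (ξ p) w = 0)
    (hξ2 : ∀ p, η p (ξ p) = 1)
    -- the Hamiltonian function, its differential, `ξ(H)`, and the contact field `X_H`
    (H : M → ℝ) (hH : ContMDiff I 𝓘(ℝ, ℝ) (⊤ : ℕ∞) H)
    (dH : (p : M) → TangentSpace I p →L[ℝ] ℝ)
    (hdH : ∀ p, dH p = mfderiv I 𝓘(ℝ, ℝ) H p)
    (ξH : M → ℝ) (hξH : ∀ p, ξH p = dH p (ξ p))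
    (XH : (p : M) → TangentSpace I p)
    (hXH1 : ∀ p (w : TangentSpace I p), dη p (XH p) w = - dH p w + ξH p * η p w)
    (hXH2 : ∀ p, η p (XH p) = H p)
    -- the fibration
    {F : Type*} [NormedAddCommGroup F] [NormedSpace ℝ F] [FiniteDimensional ℝ F]
    {HN : Type*} [TopologicalSpace HN]
    (J : ModelWithCorners ℝ F HN)
    {N : Type*} [TopologicalSpace N] [ChartedSpace HN N] [IsManifold J (⊤ : ℕ∞) N]
    (proj : M → N) (hproj : ContMDiff I J (⊤ : ℕ∞) proj)
    (hsurj : Function.Surjective proj)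
    (hsubm : ∀ p : M, Function.Surjective (mfderiv I J proj p))
    -- a section of the fibration and the projected field `X_H^σ := proj_* ∘ X_H ∘ σ`
    (σ : N → M) (hσ : ContMDiff J I (⊤ : ℕ∞) σ)
    (hsec : ∀ q, proj (σ q) = q)
    (XHσ : (q : N) → TangentSpace J q)
    (hXHσ : ∀ q, XHσ q = mfderiv I J proj (σ q) (XH (σ q)))
    (hA : ∀ q (v : TangentSpace J q),
      dη (σ q) (mfderiv J I σ q (XHσ q)) (mfderiv J I σ q v) =
        ξH (σ q) * η (σ q) (mfderiv J I σ q v) - dH (σ q) (mfderiv J I σ q v))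
    (hB : ∀ q, η (σ q) (mfderiv J I σ q (XHσ q)) = H (σ q)) :
    ∀ q,
      mfderiv I J proj (σ q) (mfderiv J I σ q (XHσ q) - XH (σ q)) = 0 ∧
      (∀ u ∈ Set.range (mfderiv J I σ q),
        dη (σ q) (mfderiv J I σ q (XHσ q) - XH (σ q)) u = 0) ∧
      η (σ q) (mfderiv J I σ q (XHσ q) - XH (σ q)) = 0 :=
  stmt_7_general I η dη H dH ξH XH hXH1 hXH2 J proj hproj σ hσ hsec XHσ hXHσ hA hB
end

section
/- In the contact Hamilton–Jacobi setting, if the fibration Π satisfies Ker Π_* ∩ Ker η ⊆ (Ker Π_*)^⊥ (dη-orthogonal), then a section σ of Π solves the Π-Hamilton–Jacobi equation for X_H if and only if it satisfies i_{X_H^σ} σ* dη = σ*(ξ(H) η − dH) and i_{X_H^σ} σ* η = σ* H. -/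
/-!
The forward direction is substitution of `σ_* X_H^σ = X_H ∘ σ` into the defining equations of
`X_H`. Conversely, `v := σ_* X_H^σ - X_H ∘ σ` lies in `Ker Π_* ∩ Ker η`, because `Π ∘ σ = id` and
`η(X_H) = H`. The first equation makes `dη(v, ·)` vanish on the image of `σ_*`, pre-isotropy makes
it vanish on `Ker Π_*`, and these two subspaces span the tangent space. So `v ∈ Ker η ∩ Ker dη`,
which the contact condition forces to be `0`.
-/

open scoped Manifold

open Function

section Manifold

variable {𝕜 : Type*} [NontriviallyNormedField 𝕜]
  {E : Type*} [NormedAddCommGroup E] [NormedSpace 𝕜 E] {H : Type*} [TopologicalSpace H]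
  {I : ModelWithCorners 𝕜 E H} {M : Type*} [TopologicalSpace M] [ChartedSpace H M]
  {E' : Type*} [NormedAddCommGroup E'] [NormedSpace 𝕜 E'] {H' : Type*} [TopologicalSpace H']
  {J : ModelWithCorners 𝕜 E' H'} {N : Type*} [TopologicalSpace N] [ChartedSpace H' N]

theorem Function.LeftInverse.mfderiv_apply_mfderiv {f : M → N} {g : N → M}
    (hfg : LeftInverse f g) {q : N} (hf : MDifferentiableAt I J f (g q))
    (hg : MDifferentiableAt J I g q) (w : TangentSpace J q) :
    mfderiv I J f (g q) (mfderiv J I g q w) = w := by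
  rw [← mfderiv_comp_apply q hf hg, hfg.comp_eq_id, mfderiv_id]
  rfl

end Manifold

section LinearAlgebra

variable {𝕜 V W : Type*} [NormedField 𝕜] [AddCommGroup V] [Module 𝕜 V] [TopologicalSpace V]
  [AddCommGroup W] [Module 𝕜 W] [TopologicalSpace W]
  {π : V →L[𝕜] W} {s : W →L[𝕜] V} {η : V →L[𝕜] 𝕜} {ω : V →L[𝕜] V →L[𝕜] 𝕜}

theorem ContinuousLinearMap.apply_eq_zero_of_apply_section_eq_zero (hπs : ∀ w, π (s w) = w)
    (hpre : ∀ v, π v = 0 → η v = 0 → ∀ w, π w = 0 → ω v w = 0)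
    {v : V} (hπv : π v = 0) (hηv : η v = 0) (hvs : ∀ w, ω v (s w) = 0) (u : V) :
    ω v u = 0 := by
  have hvert : π (u - s (π u)) = 0 := by rw [map_sub, hπs, sub_self]
  calc ω v u = ω v (s (π u)) + ω v (u - s (π u)) := by rw [map_sub, add_sub_cancel]
    _ = 0 := by rw [hvs, hpre v hπv hηv _ hvert, add_zero]

theorem ContinuousLinearMap.eq_of_map_eq_of_apply_section_eq (hπs : ∀ w, π (s w) = w)
    (hcontact : ∀ v, η v = 0 → (∀ w, ω v w = 0) → v = 0)
    (hpre : ∀ v, π v = 0 → η v = 0 → ∀ w, π w = 0 → ω v w = 0)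
    {x y : V} (hπ : π x = π y) (hη : η x = η y) (hω : ∀ w, ω x (s w) = ω y (s w)) :
    x = y := by
  have hπv : π (x - y) = 0 := by rw [map_sub, hπ, sub_self]
  have hηv : η (x - y) = 0 := by rw [map_sub, hη, sub_self]
  refine sub_eq_zero.mp (hcontact _ hηv fun u => ?_)
  refine apply_eq_zero_of_apply_section_eq_zero hπs hpre hπv hηv (fun w => ?_) u
  rw [map_sub, sub_apply, hω, sub_self]

end LinearAlgebra

theorem stmt_8_general
    {E : Type*} [NormedAddCommGroup E] [NormedSpace ℝ E]
    {HM : Type*} [TopologicalSpace HM]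
    (I : ModelWithCorners ℝ E HM)
    {M : Type*} [TopologicalSpace M] [ChartedSpace HM M]
    -- the contact form and its exterior differential, as pointwise (bi)linear forms
    (η : (p : M) → TangentSpace I p →L[ℝ] ℝ)
    (dη : (p : M) → TangentSpace I p →L[ℝ] TangentSpace I p →L[ℝ] ℝ)
    -- contact condition: `(dη)^n ∧ η` is a volume form, encoded as `Ker η_p ∩ Ker dη_p = 0`
    (hcontact : ∀ p (v : TangentSpace I p),
      η p v = 0 → (∀ w, dη p v w = 0) → v = 0)
    -- the Hamiltonian function, its differential, `ξ(H)`, and the contact field `X_H`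
    (H : M → ℝ)
    (dH : (p : M) → TangentSpace I p →L[ℝ] ℝ)
    (ξH : M → ℝ)
    (XH : (p : M) → TangentSpace I p)
    (hXH1 : ∀ p (w : TangentSpace I p), dη p (XH p) w = - dH p w + ξH p * η p w)
    (hXH2 : ∀ p, η p (XH p) = H p)
    -- the fibration
    {F : Type*} [NormedAddCommGroup F] [NormedSpace ℝ F]
    {HN : Type*} [TopologicalSpace HN]
    (J : ModelWithCorners ℝ F HN)
    {N : Type*} [TopologicalSpace N] [ChartedSpace HN N]
    (proj : M → N) (hproj : ContMDiff I J (⊤ : ℕ∞) proj)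
    -- a section of the fibration and the projected field `X_H^σ := proj_* ∘ X_H ∘ σ`
    (σ : N → M) (hσ : ContMDiff J I (⊤ : ℕ∞) σ)
    (hsec : ∀ q, proj (σ q) = q)
    (XHσ : (q : N) → TangentSpace J q)
    (hXHσ : ∀ q, XHσ q = mfderiv I J proj (σ q) (XH (σ q)))
    -- pre-isotropy of the fibration: Ker proj_* ∩ Ker η ⊆ (Ker proj_*)^⊥
    (hpre : ∀ p (v : TangentSpace I p), mfderiv I J proj p v = 0 → η p v = 0 →
      ∀ w : TangentSpace I p, mfderiv I J proj p w = 0 → dη p v w = 0) :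
    (∀ q, mfderiv J I σ q (XHσ q) = XH (σ q)) ↔
      ((∀ q (v : TangentSpace J q),
      dη (σ q) (mfderiv J I σ q (XHσ q)) (mfderiv J I σ q v) =
        ξH (σ q) * η (σ q) (mfderiv J I σ q v) - dH (σ q) (mfderiv J I σ q v)) ∧
       (∀ q, η (σ q) (mfderiv J I σ q (XHσ q)) = H (σ q))) := by
  refine ⟨fun hHJ => ⟨fun q v => ?_, fun q => by rw [hHJ q, hXH2]⟩,
    fun ⟨hω, hη⟩ q => ?_⟩
  · rw [hHJ q, hXH1]
    ring
  have hπs : ∀ w, mfderiv I J proj (σ q) (mfderiv J I σ q w) = w :=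
    LeftInverse.mfderiv_apply_mfderiv hsec (hproj.mdifferentiable (by simp) _)
      (hσ.mdifferentiable (by simp) q)
  refine ContinuousLinearMap.eq_of_map_eq_of_apply_section_eq hπs (hcontact (σ q))
    (hpre (σ q)) ((hπs _).trans (hXHσ q)) (by rw [hη, hXH2]) fun w => ?_
  -- the lemma phrases the goal via `Real.normedField`, an instance path `rw` cannot match
  show dη (σ q) _ (mfderiv J I σ q w) = dη (σ q) (XH (σ q)) (mfderiv J I σ q w)
  rw [hω, hXH1]
  ring

/-- If the fibration satisfies `Ker proj_* ∩ Ker η ⊆ (Ker proj_*)^⊥`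
(`dη`-orthogonal), then a section `σ` solves the Π-Hamilton–Jacobi equation for `X_H`
iff `i_{X_H^σ} σ*dη = σ*(ξ(H) η − dH)` and `i_{X_H^σ} σ*η = σ*H`. -/
theorem stmt_8
    {n : ℕ}
    {E : Type*} [NormedAddCommGroup E] [NormedSpace ℝ E] [FiniteDimensional ℝ E]
    {HM : Type*} [TopologicalSpace HM]
    (I : ModelWithCorners ℝ E HM)
    {M : Type*} [TopologicalSpace M] [ChartedSpace HM M] [IsManifold I ((⊤ : ℕ∞) : WithTop ℕ∞) M]
    (hdim : Module.finrank ℝ E = 2 * n + 1)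
    -- the contact form and its exterior differential, as pointwise (bi)linear forms
    (η : (p : M) → TangentSpace I p →L[ℝ] ℝ)
    (dη : (p : M) → TangentSpace I p →L[ℝ] TangentSpace I p →L[ℝ] ℝ)
    (hskew : ∀ p (v w : TangentSpace I p), dη p v w = - dη p w v)
    -- contact condition: `(dη)^n ∧ η` is a volume form, encoded as `Ker η_p ∩ Ker dη_p = 0`
    (hcontact : ∀ p (v : TangentSpace I p),
      η p v = 0 → (∀ w, dη p v w = 0) → v = 0)
    -- the Reeb vector field
    (ξ : (p : M) → TangentSpace I p)
    (hξ1 : ∀ p (w : TangentSpace I p), dη p (ξ p) w = 0)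
    (hξ2 : ∀ p, η p (ξ p) = 1)
    -- the Hamiltonian function, its differential, `ξ(H)`, and the contact field `X_H`
    (H : M → ℝ) (hH : ContMDiff I 𝓘(ℝ, ℝ) (⊤ : ℕ∞) H)
    (dH : (p : M) → TangentSpace I p →L[ℝ] ℝ)
    (hdH : ∀ p, dH p = mfderiv I 𝓘(ℝ, ℝ) H p)
    (ξH : M → ℝ) (hξH : ∀ p, ξH p = dH p (ξ p))
    (XH : (p : M) → TangentSpace I p)
    (hXH1 : ∀ p (w : TangentSpace I p), dη p (XH p) w = - dH p w + ξH p * η p w)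
    (hXH2 : ∀ p, η p (XH p) = H p)
    -- the fibration
    {F : Type*} [NormedAddCommGroup F] [NormedSpace ℝ F] [FiniteDimensional ℝ F]
    {HN : Type*} [TopologicalSpace HN]
    (J : ModelWithCorners ℝ F HN)
    {N : Type*} [TopologicalSpace N] [ChartedSpace HN N] [IsManifold J ((⊤ : ℕ∞) : WithTop ℕ∞) N]
    (proj : M → N) (hproj : ContMDiff I J (⊤ : ℕ∞) proj)
    (hsurj : Function.Surjective proj)
    (hsubm : ∀ p : M, Function.Surjective (mfderiv I J proj p))
    -- a section of the fibration and the projected field `X_H^σ := proj_* ∘ X_H ∘ σ`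
    (σ : N → M) (hσ : ContMDiff J I (⊤ : ℕ∞) σ)
    (hsec : ∀ q, proj (σ q) = q)
    (XHσ : (q : N) → TangentSpace J q)
    (hXHσ : ∀ q, XHσ q = mfderiv I J proj (σ q) (XH (σ q)))
    -- pre-isotropy of the fibration: Ker proj_* ∩ Ker η ⊆ (Ker proj_*)^⊥
    (hpre : ∀ p (v : TangentSpace I p), mfderiv I J proj p v = 0 → η p v = 0 →
      ∀ w : TangentSpace I p, mfderiv I J proj p w = 0 → dη p v w = 0) :
    (∀ q, mfderiv J I σ q (XHσ q) = XH (σ q)) ↔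
      ((∀ q (v : TangentSpace J q),
      dη (σ q) (mfderiv J I σ q (XHσ q)) (mfderiv J I σ q v) =
        ξH (σ q) * η (σ q) (mfderiv J I σ q v) - dH (σ q) (mfderiv J I σ q v)) ∧
       (∀ q, η (σ q) (mfderiv J I σ q (XHσ q)) = H (σ q))) :=
  stmt_8_general I η dη hcontact H dH ξH XH hXH1 hXH2 J proj hproj σ hσ hsec XHσ hXHσ hpre
end

section
/- A surjective local diffeomorphism Σ : N × Λ → M satisfying Π ∘ Σ = pr_N is a complete solution of the Π-Hamilton–Jacobi equation for a contact field X_H if and only if i_{X_H^Σ} Σ* dη = Σ*(ξ(H) η − dH) and i_{X_H^Σ} Σ* η = Σ* H, i.e. X_H^Σ is a contact Hamiltonian field on (N × Λ, Σ* η) with Hamiltonian H ∘ Σ. -/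
open scoped Manifold

/-!
Since `X_H^Σ` has no `Λ`-component, `TΣ (X_H^Σ)` at `(q, l)` equals `Tσ_l (TΠ X_H)`, so the
Hamilton–Jacobi equation for every `σ_l` says exactly that `X_H^Σ` is `Σ`-related to `X_H`.
A tangent vector of a contact manifold is determined by its contractions with `η` and `dη`
(`Ker η ∩ Ker dη = 0`), and `TΣ` is onto, so this relatedness is equivalent to the two
pulled-back equations.
-/

section Nondegenerate

variable {𝕜 V W : Type*} [NormedField 𝕜] [AddCommGroup V] [Module 𝕜 V] [TopologicalSpace V]

theorem eq_of_forms_eq_of_ker_inf_eq_bot (α : V →L[𝕜] 𝕜) (β : V →L[𝕜] V →L[𝕜] 𝕜)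
    (hker : ∀ v, α v = 0 → (∀ w, β v w = 0) → v = 0) {v v' : V}
    (hα : α v = α v') (hβ : ∀ w, β v w = β v' w) : v = v' := by
  refine sub_eq_zero.mp (hker _ ?_ fun w => ?_)
  · rw [map_sub, hα, sub_self]
  · rw [map_sub, sub_apply, hβ, sub_self]

theorem forms_eq_comp_iff_eq_of_ker_inf_eq_bot (α : V →L[𝕜] 𝕜) (β : V →L[𝕜] V →L[𝕜] 𝕜)
    (hker : ∀ v, α v = 0 → (∀ w, β v w = 0) → v = 0) {L : W → V}
    (hL : Function.Surjective L) {v v' : V} :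
    ((∀ w, β v (L w) = β v' (L w)) ∧ α v = α v') ↔ v = v' := by
  refine ⟨fun ⟨hβ, hα⟩ => eq_of_forms_eq_of_ker_inf_eq_bot α β hker hα fun w => ?_,
    fun h => h ▸ ⟨fun _ => rfl, rfl⟩⟩
  obtain ⟨u, rfl⟩ := hL w
  exact hβ u

end Nondegenerate

theorem mfderiv_apply_of_mfderiv_snd_eq_zero
    {𝕜 : Type*} [NontriviallyNormedField 𝕜]
    {E : Type*} [NormedAddCommGroup E] [NormedSpace 𝕜 E]
    {H : Type*} [TopologicalSpace H] {I : ModelWithCorners 𝕜 E H}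
    {M : Type*} [TopologicalSpace M] [ChartedSpace H M]
    {E' : Type*} [NormedAddCommGroup E'] [NormedSpace 𝕜 E']
    {H' : Type*} [TopologicalSpace H'] {I' : ModelWithCorners 𝕜 E' H'}
    {M' : Type*} [TopologicalSpace M'] [ChartedSpace H' M']
    {E'' : Type*} [NormedAddCommGroup E''] [NormedSpace 𝕜 E'']
    {H'' : Type*} [TopologicalSpace H''] {I'' : ModelWithCorners 𝕜 E'' H''}
    {M'' : Type*} [TopologicalSpace M''] [ChartedSpace H'' M'']
    {f : M × M' → M''} {p : M × M'} (hf : MDifferentiableAt (I.prod I') I'' f p)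
    {v : TangentSpace (I.prod I') p} (hv : mfderiv (I.prod I') I' Prod.snd p v = 0) :
    mfderiv (I.prod I') I'' f p v =
      mfderiv I I'' (fun z => f (z, p.2)) p.1 (mfderiv (I.prod I') I Prod.fst p v) := by
  have hv₂ : v.2 = 0 := by rwa [mfderiv_snd] at hv
  rw [mfderiv_prod_eq_add_apply hf, hv₂, mfderiv_fst]
  exact add_eq_left.mpr (map_zero _)

theorem stmt_11_general
    {E : Type*} [NormedAddCommGroup E] [NormedSpace ℝ E]
    {HM : Type*} [TopologicalSpace HM]
    (I : ModelWithCorners ℝ E HM)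
    {M : Type*} [TopologicalSpace M] [ChartedSpace HM M]
    -- the contact form and its exterior differential, as pointwise (bi)linear forms
    (η : (p : M) → TangentSpace I p →L[ℝ] ℝ)
    (dη : (p : M) → TangentSpace I p →L[ℝ] TangentSpace I p →L[ℝ] ℝ)
    -- contact condition: `(dη)^n ∧ η` is a volume form, encoded as `Ker η_p ∩ Ker dη_p = 0`
    (hcontact : ∀ p (v : TangentSpace I p),
      η p v = 0 → (∀ w, dη p v w = 0) → v = 0)
    -- the Hamiltonian function, its differential, `ξ(H)`, and the contact field `X_H`
    (H : M → ℝ)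
    (dH : (p : M) → TangentSpace I p →L[ℝ] ℝ)
    (ξH : M → ℝ)
    (XH : (p : M) → TangentSpace I p)
    (hXH1 : ∀ p (w : TangentSpace I p), dη p (XH p) w = - dH p w + ξH p * η p w)
    (hXH2 : ∀ p, η p (XH p) = H p)
    -- the fibration
    {F : Type*} [NormedAddCommGroup F] [NormedSpace ℝ F]
    {HN : Type*} [TopologicalSpace HN]
    (J : ModelWithCorners ℝ F HN)
    {N : Type*} [TopologicalSpace N] [ChartedSpace HN N]
    (proj : M → N)
    -- the parameter manifold Λ
    {G : Type*} [NormedAddCommGroup G] [NormedSpace ℝ G]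
    {HL : Type*} [TopologicalSpace HL]
    (K : ModelWithCorners ℝ G HL)
    {Λ : Type*} [TopologicalSpace Λ] [ChartedSpace HL Λ]
    -- Σ : N × Λ → M, a surjective local diffeomorphism with proj ∘ Σ = pr_N
    (S : N × Λ → M) (hS : ContMDiff (J.prod K) I (⊤ : ℕ∞) S)
    (hSloc : ∀ x, Function.Bijective (mfderiv (J.prod K) I S x))
    -- the vector field X_H^Σ on N × Λ, characterized by its two projections
    (XHS : (x : N × Λ) → TangentSpace (J.prod K) x)
    (hXHS1 : ∀ x, mfderiv (J.prod K) J Prod.fst x (XHS x) =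
      mfderiv I J proj (S x) (XH (S x)))
    (hXHS2 : ∀ x, mfderiv (J.prod K) K Prod.snd x (XHS x) = 0) :
    -- Σ is a complete solution: every σ_l := S (·, l) solves the Π-HJE for X_H
    (∀ (l : Λ) (q : N),
        mfderiv J I (fun q => S (q, l)) q
          (mfderiv I J proj (S (q, l)) (XH (S (q, l)))) = XH (S (q, l))) ↔
      ((∀ x (v : TangentSpace (J.prod K) x),
          dη (S x) (mfderiv (J.prod K) I S x (XHS x)) (mfderiv (J.prod K) I S x v) =
            ξH (S x) * η (S x) (mfderiv (J.prod K) I S x v)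
              - dH (S x) (mfderiv (J.prod K) I S x v)) ∧
       (∀ x, η (S x) (mfderiv (J.prod K) I S x (XHS x)) = H (S x))) := by
  have hSXHS : ∀ x, mfderiv (J.prod K) I S x (XHS x) =
      mfderiv J I (fun q => S (q, x.2)) x.1 (mfderiv I J proj (S x) (XH (S x))) := fun x => by
    rw [mfderiv_apply_of_mfderiv_snd_eq_zero ((hS x).mdifferentiableAt (by simp)) (hXHS2 x),
      hXHS1]
  have hXH : ∀ p (w : TangentSpace I p), dη p (XH p) w = ξH p * η p w - dH p w := fun p w => by
    rw [hXH1, neg_add_eq_sub]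
  calc (∀ (l : Λ) (q : N), mfderiv J I (fun q => S (q, l)) q
          (mfderiv I J proj (S (q, l)) (XH (S (q, l)))) = XH (S (q, l)))
      ↔ ∀ x, mfderiv (J.prod K) I S x (XHS x) = XH (S x) := by
        simp only [hSXHS, Prod.forall]
        exact forall_comm
    _ ↔ _ := by
      simp only [← forms_eq_comp_iff_eq_of_ker_inf_eq_bot _ _ (hcontact _) (hSloc _).2, hXH,
        hXH2, forall_and]

/-- A surjective local diffeomorphism `Σ : N × Λ → M` with `proj ∘ Σ = pr_N`
is a complete solution of the Π-Hamilton–Jacobi equation for the contact field `X_H` iff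
`i_{X_H^Σ} Σ*dη = Σ*(ξ(H) η − dH)` and `i_{X_H^Σ} Σ*η = Σ*H`, i.e. `X_H^Σ` is a contact
Hamiltonian field on `(N × Λ, Σ*η)` with Hamiltonian `H ∘ Σ`. -/
theorem stmt_11
    {n : ℕ}
    {E : Type*} [NormedAddCommGroup E] [NormedSpace ℝ E] [FiniteDimensional ℝ E]
    {HM : Type*} [TopologicalSpace HM]
    (I : ModelWithCorners ℝ E HM)
    {M : Type*} [TopologicalSpace M] [ChartedSpace HM M] [IsManifold I (⊤ : ℕ∞) M]
    (hdim : Module.finrank ℝ E = 2 * n + 1)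
    -- the contact form and its exterior differential, as pointwise (bi)linear forms
    (η : (p : M) → TangentSpace I p →L[ℝ] ℝ)
    (dη : (p : M) → TangentSpace I p →L[ℝ] TangentSpace I p →L[ℝ] ℝ)
    (hskew : ∀ p (v w : TangentSpace I p), dη p v w = - dη p w v)
    -- contact condition: `(dη)^n ∧ η` is a volume form, encoded as `Ker η_p ∩ Ker dη_p = 0`
    (hcontact : ∀ p (v : TangentSpace I p),
      η p v = 0 → (∀ w, dη p v w = 0) → v = 0)
    -- the Reeb vector field
    (ξ : (p : M) → TangentSpace I p)
    (hξ1 : ∀ p (w : TangentSpace I p), dη p (ξ p) w = 0)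
    (hξ2 : ∀ p, η p (ξ p) = 1)
    -- the Hamiltonian function, its differential, `ξ(H)`, and the contact field `X_H`
    (H : M → ℝ) (hH : ContMDiff I 𝓘(ℝ, ℝ) (⊤ : ℕ∞) H)
    (dH : (p : M) → TangentSpace I p →L[ℝ] ℝ)
    (hdH : ∀ p, dH p = mfderiv I 𝓘(ℝ, ℝ) H p)
    (ξH : M → ℝ) (hξH : ∀ p, ξH p = dH p (ξ p))
    (XH : (p : M) → TangentSpace I p)
    (hXH1 : ∀ p (w : TangentSpace I p), dη p (XH p) w = - dH p w + ξH p * η p w)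
    (hXH2 : ∀ p, η p (XH p) = H p)
    -- the fibration
    {F : Type*} [NormedAddCommGroup F] [NormedSpace ℝ F] [FiniteDimensional ℝ F]
    {HN : Type*} [TopologicalSpace HN]
    (J : ModelWithCorners ℝ F HN)
    {N : Type*} [TopologicalSpace N] [ChartedSpace HN N] [IsManifold J (⊤ : ℕ∞) N]
    (proj : M → N) (hproj : ContMDiff I J (⊤ : ℕ∞) proj)
    (hsurj : Function.Surjective proj)
    (hsubm : ∀ p : M, Function.Surjective (mfderiv I J proj p))
    -- the parameter manifold Λ
    {G : Type*} [NormedAddCommGroup G] [NormedSpace ℝ G] [FiniteDimensional ℝ G]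
    {HL : Type*} [TopologicalSpace HL]
    (K : ModelWithCorners ℝ G HL)
    {Λ : Type*} [TopologicalSpace Λ] [ChartedSpace HL Λ] [IsManifold K (⊤ : ℕ∞) Λ]
    -- Σ : N × Λ → M, a surjective local diffeomorphism with proj ∘ Σ = pr_N
    (S : N × Λ → M) (hS : ContMDiff (J.prod K) I (⊤ : ℕ∞) S)
    (hSsurj : Function.Surjective S)
    (hSloc : ∀ x, Function.Bijective (mfderiv (J.prod K) I S x))
    (hSfib : ∀ x, proj (S x) = x.1)
    -- the vector field X_H^Σ on N × Λ, characterized by its two projections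
    (XHS : (x : N × Λ) → TangentSpace (J.prod K) x)
    (hXHS1 : ∀ x, mfderiv (J.prod K) J Prod.fst x (XHS x) =
      mfderiv I J proj (S x) (XH (S x)))
    (hXHS2 : ∀ x, mfderiv (J.prod K) K Prod.snd x (XHS x) = 0) :
    -- Σ is a complete solution: every σ_l := S (·, l) solves the Π-HJE for X_H
    (∀ (l : Λ) (q : N),
        mfderiv J I (fun q => S (q, l)) q
          (mfderiv I J proj (S (q, l)) (XH (S (q, l)))) = XH (S (q, l))) ↔
      ((∀ x (v : TangentSpace (J.prod K) x),
          dη (S x) (mfderiv (J.prod K) I S x (XHS x)) (mfderiv (J.prod K) I S x v) =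
            ξH (S x) * η (S x) (mfderiv (J.prod K) I S x v)
              - dH (S x) (mfderiv (J.prod K) I S x v)) ∧
       (∀ x, η (S x) (mfderiv (J.prod K) I S x (XHS x)) = H (S x))) :=
  stmt_11_general I η dη hcontact H dH ξH XH hXH1 hXH2 J proj K S hS hSloc XHS hXHS1 hXHS2
end

section
/- Let (M, η) be a contact manifold with Reeb field ξ and H ∈ C^∞(M) with ξ(H) nowhere vanishing and 0 a regular value of H. Then M_0 := H^{-1}(0) is a symplectic manifold with symplectic form dη_0, where η_0 = i_0* η is the pullback of η along the inclusion i_0 : M_0 → M; moreover M_0 is invariant under the contact field X_H, i.e. there exists Y ∈ 𝔛(M_0) with (i_0)_* ∘ Y = X_H ∘ i_0. -/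
open scoped Manifold

/-!
Everything happens in a single tangent space. Since `ξ` lies in the radical of `dη` and
`dH(ξ) = ξ(H) ≠ 0`, we have `T_p M = Ker dH_p ⊕ ℝ ξ`, so a vector `dη`-orthogonal to
`Ker dH_p` lies in the radical of `dη`. Pairing the defining identity of `X_H` with such a
vector `v ∈ Ker dH_p` gives `ξ(H) η(v) = 0`, hence `η(v) = 0`, and the contact condition
forces `v = 0`. Pairing it with `X_H` itself gives `dH(X_H) = ξ(H) H = 0` on `M₀`.
-/

namespace LinearMap

variable {K V : Type*} [Field K] [AddCommGroup V] [Module K V] {ω : V →ₗ[K] V →ₗ[K] K}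

theorem IsRefl.apply_eq_zero_of_forall_ker (hω : ω.IsRefl) {f : Module.Dual K V} {ξ : V}
    (hξ : ∀ w, ω ξ w = 0) (hfξ : f ξ ≠ 0) {v : V}
    (hv : ∀ w, f w = 0 → ω v w = 0) (w : V) : ω v w = 0 := by
  have hker : f (w - (f w / f ξ) • ξ) = 0 := by
    rw [map_sub, map_smul, smul_eq_mul, div_mul_cancel₀ _ hfξ, sub_self]
  have := hv _ hker
  rwa [map_sub, map_smul, hω _ _ (hξ v), smul_zero, sub_zero] at this

theorem IsRefl.eq_zero_of_forall_ker_of_contact (hω : ω.IsRefl) {α f : Module.Dual K V}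
    (hcontact : ∀ v, α v = 0 → (∀ w, ω v w = 0) → v = 0)
    {ξ : V} (hξ : ∀ w, ω ξ w = 0) (hfξ : f ξ ≠ 0)
    {X : V} {c : K} (hc : c ≠ 0) (hX : ∀ w, ω X w = -f w + c * α w)
    {v : V} (hfv : f v = 0) (hv : ∀ w, f w = 0 → ω v w = 0) : v = 0 := by
  have hrad := hω.apply_eq_zero_of_forall_ker hξ hfξ hv
  have hαv : c * α v = 0 := by
    simpa [hfv, hω _ _ (hrad X)] using (hX v).symm
  exact hcontact v ((mul_eq_zero.mp hαv).resolve_left hc) hrad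

end LinearMap

theorem LinearMap.IsAlt.apply_eq_zero_of_apply_eq_neg_add {R V : Type*} [CommRing R]
    [AddCommGroup V] [Module R V] {ω : V →ₗ[R] V →ₗ[R] R} (hω : ω.IsAlt)
    {α f : Module.Dual R V} {X : V} {c : R} (hX : ∀ w, ω X w = -f w + c * α w)
    (hαX : α X = 0) : f X = 0 := by
  simpa [hω X, hαX] using hX X

theorem stmt_17_general
    {E : Type*} [NormedAddCommGroup E] [NormedSpace ℝ E]
    {HM : Type*} [TopologicalSpace HM]
    (I : ModelWithCorners ℝ E HM)
    {M : Type*} [TopologicalSpace M] [ChartedSpace HM M]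
    -- the contact form and its exterior differential, as pointwise (bi)linear forms
    (η : (p : M) → TangentSpace I p →L[ℝ] ℝ)
    (dη : (p : M) → TangentSpace I p →L[ℝ] TangentSpace I p →L[ℝ] ℝ)
    (hskew : ∀ p (v w : TangentSpace I p), dη p v w = - dη p w v)
    -- contact condition: `(dη)^n ∧ η` is a volume form, encoded as `Ker η_p ∩ Ker dη_p = 0`
    (hcontact : ∀ p (v : TangentSpace I p),
      η p v = 0 → (∀ w, dη p v w = 0) → v = 0)
    -- the Reeb vector field
    (ξ : (p : M) → TangentSpace I p)
    (hξ1 : ∀ p (w : TangentSpace I p), dη p (ξ p) w = 0)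
    -- the Hamiltonian function, its differential, `ξ(H)`, and the contact field `X_H`
    (H : M → ℝ)
    (dH : (p : M) → TangentSpace I p →L[ℝ] ℝ)
    (ξH : M → ℝ) (hξH : ∀ p, ξH p = dH p (ξ p))
    (XH : (p : M) → TangentSpace I p)
    (hXH1 : ∀ p (w : TangentSpace I p), dη p (XH p) w = - dH p w + ξH p * η p w)
    (hXH2 : ∀ p, η p (XH p) = H p)
    -- ξ(H) is nowhere vanishing
    (hξH0 : ∀ p, ξH p ≠ 0) :
    ∀ p, H p = 0 →
      -- dη is nondegenerate on T_p M₀ = Ker dH_p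
      ((∀ v : TangentSpace I p, dH p v = 0 →
          (∀ w : TangentSpace I p, dH p w = 0 → dη p v w = 0) → v = 0) ∧
       -- X_H is tangent to M₀
       dH p (XH p) = 0) := by
  intro p hp
  have halt : (dη p).toLinearMap₁₂.IsAlt :=
    LinearMap.isAlt_iff_eq_neg_flip.2 (by ext v w; exact hskew p v w)
  have hdHξ : dH p (ξ p) ≠ 0 := hξH p ▸ hξH0 p
  exact ⟨fun v hv hvw => halt.isRefl.eq_zero_of_forall_ker_of_contact (f := (dH p).toLinearMap)
      (hcontact p) (hξ1 p) hdHξ (hξH0 p) (hXH1 p) hv hvw,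
    halt.apply_eq_zero_of_apply_eq_neg_add (α := (η p).toLinearMap) (hXH1 p) ((hXH2 p).trans hp)⟩

/-- If `ξ(H)` is nowhere vanishing and `0` is a regular value of `H`, then
`M₀ := H⁻¹(0)` is a symplectic manifold with symplectic form `dη₀ = i₀* dη` (i.e. `dη`
restricted to `T_p M₀ = Ker dH_p` is nondegenerate), and `M₀` is `X_H`-invariant
(`X_H` is tangent to `M₀`, i.e. `dH(X_H) = 0` on `M₀`). -/
theorem stmt_17
    {n : ℕ}
    {E : Type*} [NormedAddCommGroup E] [NormedSpace ℝ E] [FiniteDimensional ℝ E]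
    {HM : Type*} [TopologicalSpace HM]
    (I : ModelWithCorners ℝ E HM)
    {M : Type*} [TopologicalSpace M] [ChartedSpace HM M] [IsManifold I ((⊤ : ℕ∞) : WithTop ℕ∞) M]
    (hdim : Module.finrank ℝ E = 2 * n + 1)
    -- the contact form and its exterior differential, as pointwise (bi)linear forms
    (η : (p : M) → TangentSpace I p →L[ℝ] ℝ)
    (dη : (p : M) → TangentSpace I p →L[ℝ] TangentSpace I p →L[ℝ] ℝ)
    (hskew : ∀ p (v w : TangentSpace I p), dη p v w = - dη p w v)
    -- contact condition: `(dη)^n ∧ η` is a volume form, encoded as `Ker η_p ∩ Ker dη_p = 0`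
    (hcontact : ∀ p (v : TangentSpace I p),
      η p v = 0 → (∀ w, dη p v w = 0) → v = 0)
    -- the Reeb vector field
    (ξ : (p : M) → TangentSpace I p)
    (hξ1 : ∀ p (w : TangentSpace I p), dη p (ξ p) w = 0)
    (hξ2 : ∀ p, η p (ξ p) = 1)
    -- the Hamiltonian function, its differential, `ξ(H)`, and the contact field `X_H`
    (H : M → ℝ) (hH : ContMDiff I 𝓘(ℝ, ℝ) (⊤ : ℕ∞) H)
    (dH : (p : M) → TangentSpace I p →L[ℝ] ℝ)
    (hdH : ∀ p, dH p = mfderiv I 𝓘(ℝ, ℝ) H p)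
    (ξH : M → ℝ) (hξH : ∀ p, ξH p = dH p (ξ p))
    (XH : (p : M) → TangentSpace I p)
    (hXH1 : ∀ p (w : TangentSpace I p), dη p (XH p) w = - dH p w + ξH p * η p w)
    (hXH2 : ∀ p, η p (XH p) = H p)
    -- 0 is a regular value of H
    (hreg : ∀ p, H p = 0 → dH p ≠ 0)
    -- ξ(H) is nowhere vanishing
    (hξH0 : ∀ p, ξH p ≠ 0) :
    ∀ p, H p = 0 →
      -- dη is nondegenerate on T_p M₀ = Ker dH_p
      ((∀ v : TangentSpace I p, dH p v = 0 →
          (∀ w : TangentSpace I p, dH p w = 0 → dη p v w = 0) → v = 0) ∧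
       -- X_H is tangent to M₀
       dH p (XH p) = 0) :=
  stmt_17_general I η dη hskew hcontact ξ hξ1 H dH ξH hξH XH hXH1 hXH2 hξH0
end
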